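/- Let N ≥ 2. Define F_A(v) = (1/2)∑_{i=1}^N v_i² − ∑_{1≤i<j≤N} log|v_j − v_i| for v ∈ ℝ^N with pairwise distinct coordinates, and K_A = (N/4)(N−1)(1 + log 2) − (1/2)∑_{i=1}^N i·log i. Let h_N = (h_{N,1}, …, h_{N,N}) be the vector of zeros of the N-th physicists' Hermite polynomial H_N in increasing order. Then F_A(v) ≥ K_A for every v ∈ ℝ^N with pairwise distinct coordinates, and equality holds if and only if (v_1, …, v_N) is a permutation of (h_{N,1}, …, h_{N,N}); in particular F_A(h_N) = K_A. -/

import Mathlib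

/-!
Let `h` be the increasing vector of zeros of `H_N`. Evaluating `H_N'' = 2x H_N' - 2N H_N` at a
zero and factoring `H_N = 2^N ∏ (X - h_j)` gives the Stieltjes relations
`h_i = ∑_{j ≠ i} 1/(h_i - h_j)`: `h` is a critical point of `F_A`. On the cone of increasing
vectors every pair term `-log (v_j - v_i)` is convex, so the tangent-line inequality
`log t ≤ t - 1` gives `F_A(v) ≥ F_A(h) + ½ ‖v - h‖²`; as `F_A` is symmetric, sorting `v` reduces
the general case to this cone, and the equality case is read off the quadratic term.

The value `F_A(h) = K_A` comes from `∑ h_i² = N(N-1)/2` (again by the Stieltjes relations) and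
from `∏_i |H_N'(h_i)| = ∏_{m=1}^N (2m)^m`. The latter follows by induction from
`H_N' = 2N H_{N-1}`, from `H_{N+1} = -H_N'` at the zeros of `H_N`, and from the symmetry of
`∏_{H_{N+1}(x) = 0} |H_N(x)|` and `∏_{H_N(y) = 0} |H_{N+1}(y)|` (both equal
`2^{N(N+1)} ∏ |x - y|`); by Rolle, every `H_k` with `k ≤ N` has `k` simple real zeros.
-/

open Finset

/-- The physicists' Hermite polynomial `H_N(x) = (−1)^N e^{x²} (d/dx)^N e^{−x²}`. -/
noncomputable def physHermite (N : ℕ) (x : ℝ) : ℝ :=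
  (-1 : ℝ) ^ N * Real.exp (x ^ 2) * iteratedDeriv N (fun y => Real.exp (-(y ^ 2))) x

open Polynomial

section ProdXSubC

variable {K ι : Type*} [Field K] [DecidableEq ι]

lemma eval_derivative_prod_X_sub_C {x : ι → K} {s : Finset ι} {a : K}
    (ha : ∀ j ∈ s, a - x j ≠ 0) :
    eval a (derivative (∏ j ∈ s, (X - C (x j))))
      = (∏ j ∈ s, (a - x j)) * ∑ j ∈ s, (a - x j)⁻¹ := by
  rw [derivative_prod_finset, eval_finsetSum, Finset.mul_sum]
  refine Finset.sum_congr rfl fun j hj => ?_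
  rw [derivative_X_sub_C, mul_one, eval_prod, ← Finset.mul_prod_erase s _ hj,
    mul_comm (a - x j), mul_assoc, mul_inv_cancel₀ (ha j hj), mul_one]
  simp

variable [Fintype ι] {p : K[X]} {c : K} {x : ι → K}

lemma sub_ne_zero_of_mem_erase (hx : Function.Injective x) {i j : ι} (hj : j ∈ univ.erase i) :
    x i - x j ≠ 0 :=
  sub_ne_zero.mpr fun hij => ne_of_mem_erase hj (hx hij).symm

lemma prod_erase_sub_ne_zero (hx : Function.Injective x) (i : ι) :
    ∏ j ∈ univ.erase i, (x i - x j) ≠ 0 :=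
  prod_ne_zero_iff.mpr fun _ => sub_ne_zero_of_mem_erase hx

lemma eval_derivative_of_eq_C_mul_prod (hp : p = C c * ∏ j, (X - C (x j))) (i : ι) :
    eval (x i) (derivative p) = c * ∏ j ∈ univ.erase i, (x i - x j) := by
  rw [hp, ← Finset.mul_prod_erase univ _ (mem_univ i)]
  simp [derivative_mul, eval_prod]

/-- The diagonal term of the sum is `(x i - x i)⁻¹ = 0`. -/
lemma eval_derivative_derivative_of_eq_C_mul_prod (hx : Function.Injective x)
    (hp : p = C c * ∏ j, (X - C (x j))) (i : ι) :
    eval (x i) (derivative (derivative p))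
      = 2 * eval (x i) (derivative p) * ∑ j, (x i - x j)⁻¹ := by
  rw [eval_derivative_of_eq_C_mul_prod hp, hp, ← Finset.mul_prod_erase univ _ (mem_univ i),
    ← Finset.sum_erase univ (f := fun j => (x i - x j)⁻¹) (a := i) (by simp)]
  simp only [derivative_mul, derivative_add, derivative_C, derivative_X_sub_C, zero_mul, zero_add,
    one_mul, eval_mul, eval_add, eval_C, eval_sub, eval_X, sub_self, zero_mul, add_zero]
  rw [eval_derivative_prod_X_sub_C fun _ => sub_ne_zero_of_mem_erase hx]
  ring

end ProdXSubC

section LogGas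

variable {ι : Type*} [Fintype ι]

/-- `F_A`, with the pair sum taken over all ordered pairs: the diagonal terms vanish since
`Real.log 0 = 0`. -/
noncomputable def logGasEnergy (v : ι → ℝ) : ℝ :=
  (1 / 2) * ∑ i, v i ^ 2 - (1 / 2) * ∑ i, ∑ j, Real.log |v i - v j|

lemma logGasEnergy_comp_perm (v : ι → ℝ) (σ : Equiv.Perm ι) :
    logGasEnergy (v ∘ σ) = logGasEnergy v := by
  simp only [logGasEnergy, Function.comp_apply]
  rw [Equiv.sum_comp σ fun i => v i ^ 2,
    Equiv.sum_comp σ fun i => ∑ j, Real.log |v i - v (σ j)|]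
  congr 2
  exact sum_congr rfl fun i _ => Equiv.sum_comp σ fun j => Real.log |v i - v j|

lemma sum_sum_eq_two_mul_sum_Ioi [LinearOrder ι] [LocallyFiniteOrderTop ι]
    [LocallyFiniteOrderBot ι] {f : ι → ι → ℝ} (hsymm : ∀ i j, f i j = f j i)
    (hdiag : ∀ i, f i i = 0) :
    ∑ i, ∑ j, f i j = 2 * ∑ i, ∑ j ∈ Ioi i, f i j := by
  have hrow : ∀ i, ∑ j, f i j = ∑ j ∈ Ioi i, f i j + ∑ j ∈ Iio i, f i j := fun i => by
    rw [← Finset.sum_add_sum_compl {i}, sum_singleton, hdiag, zero_add, ← Ioi_disjUnion_Iio,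
      sum_disjUnion]
  have hswap : ∑ i, ∑ j ∈ Iio i, f i j = ∑ i, ∑ j ∈ Ioi i, f i j := by
    rw [Finset.sum_comm' (t' := univ) (s' := fun j => Ioi j) (by simp)]
    simp only [hsymm]
  simp only [hrow, sum_add_distrib, hswap]
  ring

lemma logGasEnergy_eq_sum_Ioi [LinearOrder ι] [LocallyFiniteOrderTop ι] [LocallyFiniteOrderBot ι]
    (v : ι → ℝ) :
    logGasEnergy v = (1 / 2) * ∑ i, v i ^ 2 - ∑ i, ∑ j ∈ Ioi i, Real.log |v j - v i| := by
  rw [logGasEnergy, Finset.sum_comm (f := fun i j => Real.log |v i - v j|),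
    sum_sum_eq_two_mul_sum_Ioi (fun i j => by rw [abs_sub_comm]) (by simp)]
  ring

lemma sum_sum_sub_div_sub (x g : ι → ℝ) :
    ∑ i, ∑ j, (g i - g j) / (x i - x j) = 2 * ∑ i, g i * ∑ j, (x i - x j)⁻¹ := by
  have hswap : ∑ i, ∑ j, g j / (x i - x j) = -∑ i, ∑ j, g i / (x i - x j) := by
    rw [Finset.sum_comm, ← sum_neg_distrib]
    refine sum_congr rfl fun i _ => ?_
    rw [← sum_neg_distrib]
    refine sum_congr rfl fun j _ => ?_
    rw [← neg_sub (x i), div_neg]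
  calc ∑ i, ∑ j, (g i - g j) / (x i - x j)
      = ∑ i, ∑ j, g i / (x i - x j) - ∑ i, ∑ j, g j / (x i - x j) := by
        simp only [sub_div, sum_sub_distrib]
    _ = 2 * ∑ i, g i * ∑ j, (x i - x j)⁻¹ := by
        rw [hswap, sub_neg_eq_add, ← two_mul]
        simp only [mul_sum, div_eq_mul_inv]

lemma sum_sq_of_eq_sum_inv_sub {x : ι → ℝ} (hx : Function.Injective x)
    (hcrit : ∀ i, x i = ∑ j, (x i - x j)⁻¹) :
    ∑ i, x i ^ 2 = Fintype.card ι * (Fintype.card ι - 1) / 2 := by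
  classical
  have hdiv : ∀ i j, (x i - x j) / (x i - x j) = 1 - if i = j then 1 else 0 := fun i j => by
    split_ifs with hij
    · simp [hij]
    · rw [div_self (sub_ne_zero.mpr (hx.ne hij)), sub_zero]
  have h := sum_sum_sub_div_sub x x
  simp only [hdiv, sum_sub_distrib, sum_ite_eq, mem_univ, if_true, sum_const, card_univ,
    nsmul_eq_mul, mul_one, ← hcrit] at h
  simp only [sq]
  linarith

lemma log_abs_sub_log_abs_le {a b : ℝ} (hab : 0 < a / b) :
    Real.log |a| - Real.log |b| ≤ a / b - 1 := by
  have ha : a ≠ 0 := fun h => by simp [h] at hab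
  have hb : b ≠ 0 := fun h => by simp [h] at hab
  rw [Real.log_abs, Real.log_abs, ← Real.log_div ha hb]
  exact Real.log_le_sub_one_of_pos hab

lemma logGasEnergy_add_le [LinearOrder ι] {x v : ι → ℝ} (hx : StrictMono x)
    (hv : StrictMono v)
    (hcrit : ∀ i, x i = ∑ j, (x i - x j)⁻¹) :
    logGasEnergy x + (1 / 2) * ∑ i, (v i - x i) ^ 2 ≤ logGasEnergy v := by
  have hpair : ∀ i j, Real.log |v i - v j| - Real.log |x i - x j|
      ≤ ((v i - x i) - (v j - x j)) / (x i - x j) := by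
    intro i j
    rcases eq_or_ne i j with rfl | hij
    · simp
    have hpos : 0 < (v i - v j) / (x i - x j) := by
      rcases hij.lt_or_gt with hlt | hlt
      · exact div_pos_of_neg_of_neg (sub_neg.mpr (hv hlt)) (sub_neg.mpr (hx hlt))
      · exact div_pos (sub_pos.mpr (hv hlt)) (sub_pos.mpr (hx hlt))
    have hne : x i - x j ≠ 0 := sub_ne_zero.mpr (hx.injective.ne hij)
    calc _ ≤ (v i - v j) / (x i - x j) - 1 := log_abs_sub_log_abs_le hpos
      _ = _ := by field_simp; ring
  have hsum := sum_le_sum fun i (_ : i ∈ univ) => sum_le_sum fun j (_ : j ∈ univ) => hpair i j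
  simp only [sum_sub_distrib, sum_sum_sub_div_sub, ← hcrit] at hsum
  have hsq : ∑ i, v i ^ 2
      = ∑ i, x i ^ 2 + 2 * ∑ i, (v i - x i) * x i + ∑ i, (v i - x i) ^ 2 := by
    simp only [mul_sum, ← sum_add_distrib]
    exact sum_congr rfl fun i _ => by ring
  unfold logGasEnergy
  linarith

end LogGas

noncomputable def physHermitePoly : ℕ → ℝ[X]
  | 0 => 1
  | n + 1 => 2 * X * physHermitePoly n - derivative (physHermitePoly n)

namespace physHermitePoly

@[simp] lemma zero : physHermitePoly 0 = 1 := rfl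

lemma succ (n : ℕ) :
    physHermitePoly (n + 1) = 2 * X * physHermitePoly n - derivative (physHermitePoly n) := rfl

lemma natDegree_and_leadingCoeff (n : ℕ) :
    (physHermitePoly n).natDegree = n ∧ (physHermitePoly n).leadingCoeff = 2 ^ n := by
  induction n with
  | zero => simp
  | succ n ih =>
    have hne : physHermitePoly n ≠ 0 := fun h0 => by
      simpa [h0] using (pow_ne_zero n two_ne_zero (M₀ := ℝ)).symm.trans_eq ih.2.symm
    have h2X : (2 * X : ℝ[X]) = C 2 * X := rfl
    have hdeg : (2 * X * physHermitePoly n).natDegree = n + 1 := by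
      rw [h2X, mul_assoc, natDegree_C_mul two_ne_zero, natDegree_X_mul hne, ih.1]
    have hlt : (derivative (physHermitePoly n)).natDegree
        < (2 * X * physHermitePoly n).natDegree :=
      hdeg ▸ (natDegree_derivative_le _).trans_lt (by omega)
    refine ⟨by rw [succ, natDegree_sub_eq_left_of_natDegree_lt hlt, hdeg], ?_⟩
    rw [succ, leadingCoeff_sub_of_degree_lt (degree_lt_degree hlt), h2X,
      leadingCoeff_mul, leadingCoeff_mul, leadingCoeff_C, leadingCoeff_X, ih.2, pow_succ]
    ring

lemma natDegree_eq (n : ℕ) : (physHermitePoly n).natDegree = n :=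
  (natDegree_and_leadingCoeff n).1

lemma leadingCoeff_eq (n : ℕ) : (physHermitePoly n).leadingCoeff = 2 ^ n :=
  (natDegree_and_leadingCoeff n).2

lemma ne_zero (n : ℕ) : physHermitePoly n ≠ 0 :=
  leadingCoeff_ne_zero.mp (by rw [leadingCoeff_eq]; positivity)

lemma derivative_succ (n : ℕ) :
    derivative (physHermitePoly (n + 1)) = C (2 * (n + 1 : ℝ)) * physHermitePoly n := by
  induction n with
  | zero => simp [succ, C_ofNat]
  | succ n ih =>
    rw [succ (n + 1), derivative_sub, derivative_mul, ih, succ n]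
    simp only [derivative_mul, derivative_X, derivative_ofNat, derivative_natCast, derivative_one,
      map_mul, map_add, map_natCast, map_one, map_ofNat, Nat.cast_add, Nat.cast_one]
    ring

lemma derivative_derivative (n : ℕ) :
    derivative (derivative (physHermitePoly n))
      = 2 * X * derivative (physHermitePoly n) - C (2 * n : ℝ) * physHermitePoly n := by
  have h := derivative_succ n
  rw [succ, derivative_sub, derivative_mul] at h
  simp only [derivative_mul, derivative_X, derivative_ofNat, map_mul, map_add, map_natCast,
    map_one, map_ofNat] at h ⊢
  linear_combination -h

lemma iteratedDeriv_gaussian (n : ℕ) (x : ℝ) :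
    iteratedDeriv n (fun y => Real.exp (-(y ^ 2))) x
      = (-1) ^ n * eval x (physHermitePoly n) * Real.exp (-(x ^ 2)) := by
  induction n generalizing x with
  | zero => simp
  | succ n ih =>
    rw [iteratedDeriv_succ, funext ih]
    have hexp : HasDerivAt (fun y : ℝ => Real.exp (-(y ^ 2)))
        (Real.exp (-(x ^ 2)) * -(2 * x)) x := by
      simpa using ((hasDerivAt_pow 2 x).neg).exp
    have hpoly := ((physHermitePoly n).hasDerivAt x).const_mul ((-1 : ℝ) ^ n)
    rw [(hpoly.fun_mul hexp).deriv, succ]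
    simp only [eval_sub, eval_mul, eval_ofNat, eval_X]
    ring

end physHermitePoly

lemma physHermite_eq_eval (n : ℕ) (x : ℝ) : physHermite n x = eval x (physHermitePoly n) := by
  rw [physHermite, physHermitePoly.iteratedDeriv_gaussian]
  have hsign : (-1 : ℝ) ^ n * (-1) ^ n = 1 := by rw [← mul_pow]; norm_num
  have hexp : Real.exp (x ^ 2) * Real.exp (-(x ^ 2)) = 1 := by rw [← Real.exp_add]; simp
  linear_combination eval x (physHermitePoly n) * (Real.exp (x ^ 2) * Real.exp (-(x ^ 2)) * hsign
    + hexp)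

namespace physHermitePoly

lemma card_roots_of_card_roots_toFinset {n : ℕ}
    (h : (physHermitePoly n).roots.toFinset.card = n) :
    Multiset.card (physHermitePoly n).roots = n :=
  le_antisymm ((card_roots' _).trans (natDegree_eq n).le)
    (h.symm.trans_le (Multiset.toFinset_card_le _))

lemma card_roots_toFinset_of_succ {n : ℕ}
    (h : (physHermitePoly (n + 1)).roots.toFinset.card = n + 1) :
    (physHermitePoly n).roots.toFinset.card = n := by
  have hRolle := card_roots_toFinset_le_derivative (physHermitePoly (n + 1))
  rw [derivative_succ, roots_C_mul _ (by positivity)] at hRolle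
  have hle : (physHermitePoly n).roots.toFinset.card ≤ n :=
    (Multiset.toFinset_card_le _).trans ((card_roots' _).trans (natDegree_eq n).le)
  omega

lemma abs_eval_eq_prod {n : ℕ} (h : Multiset.card (physHermitePoly n).roots = n) (z : ℝ) :
    |eval z (physHermitePoly n)|
      = 2 ^ n * ((physHermitePoly n).roots.map fun y => |z - y|).prod := by
  conv_lhs => rw [← C_leadingCoeff_mul_prod_multiset_X_sub_C (h.trans (natDegree_eq n).symm)]
  have habs := map_multiset_prod absHom ((physHermitePoly n).roots.map fun y => z - y)
  simp only [Multiset.map_map, Function.comp_def] at habs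
  simp only [eval_mul, eval_C, leadingCoeff_eq, eval_multiset_prod, Multiset.map_map,
    Function.comp_def, eval_sub, eval_X, abs_mul, abs_pow, abs_two]
  exact congrArg _ habs

lemma prod_abs_eval_roots_comm {n : ℕ}
    (h : Multiset.card (physHermitePoly (n + 1)).roots = n + 1)
    (h' : Multiset.card (physHermitePoly n).roots = n) :
    ((physHermitePoly (n + 1)).roots.map fun x => |eval x (physHermitePoly n)|).prod
      = ((physHermitePoly n).roots.map fun y => |eval y (physHermitePoly (n + 1))|).prod := by
  simp only [abs_eval_eq_prod h, abs_eval_eq_prod h', Multiset.prod_map_mul,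
    Multiset.map_const', Multiset.prod_replicate, h, h']
  rw [Multiset.prod_map_prod_map, ← pow_mul, ← pow_mul, mul_comm n]
  simp only [abs_sub_comm]

lemma prod_abs_eval_derivative_roots {n : ℕ} (h : (physHermitePoly n).roots.toFinset.card = n) :
    ((physHermitePoly n).roots.map fun x => |eval x (derivative (physHermitePoly n))|).prod
      = ∏ m ∈ Icc 1 n, (2 * m : ℝ) ^ m := by
  induction n with
  | zero => simp
  | succ n ih =>
    have h' := card_roots_toFinset_of_succ h
    have hroot : ∀ y ∈ (physHermitePoly n).roots,
        |eval y (physHermitePoly (n + 1))| = |eval y (derivative (physHermitePoly n))| := by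
      intro y hy
      rw [succ, eval_sub, eval_mul, (mem_roots (ne_zero n)).mp hy, mul_zero, zero_sub, abs_neg]
    calc ((physHermitePoly (n + 1)).roots.map
            fun x => |eval x (derivative (physHermitePoly (n + 1)))|).prod
        = (2 * (n + 1 : ℝ)) ^ (n + 1)
            * ((physHermitePoly (n + 1)).roots.map fun x => |eval x (physHermitePoly n)|).prod := by
          simp only [derivative_succ, eval_mul, eval_C, abs_mul, Multiset.prod_map_mul,
            Multiset.map_const', Multiset.prod_replicate, card_roots_of_card_roots_toFinset h]
          rw [abs_two, abs_of_pos (by positivity : (0 : ℝ) < n + 1)]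
      _ = (2 * (n + 1 : ℝ)) ^ (n + 1)
            * ((physHermitePoly n).roots.map fun y => |eval y (physHermitePoly (n + 1))|).prod := by
          rw [prod_abs_eval_roots_comm (card_roots_of_card_roots_toFinset h)
            (card_roots_of_card_roots_toFinset h')]
      _ = ∏ m ∈ Icc 1 (n + 1), (2 * m : ℝ) ^ m := by
          rw [Multiset.map_congr rfl hroot, ih h', Finset.prod_Icc_succ_top (by omega)]
          push_cast
          ring

variable {N : ℕ} {h : Fin N → ℝ}

lemma roots_eq_map (hinj : Function.Injective h)
    (hzero : ∀ i, (physHermitePoly N).IsRoot (h i)) :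
    (physHermitePoly N).roots = univ.val.map h := by
  have hle : univ.val.map h ≤ (physHermitePoly N).roots := by
    refine (Multiset.le_iff_subset (univ.nodup.map hinj)).mpr fun y hy => ?_
    obtain ⟨i, -, rfl⟩ := Multiset.mem_map.mp hy
    exact (mem_roots (ne_zero N)).mpr (hzero i)
  refine (Multiset.eq_of_le_of_card_le hle ?_).symm
  simpa using (card_roots' _).trans (natDegree_eq N).le

lemma eq_C_mul_prod (hinj : Function.Injective h)
    (hzero : ∀ i, (physHermitePoly N).IsRoot (h i)) :
    physHermitePoly N = C (2 ^ N) * ∏ j, (X - C (h j)) := by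
  have hcard : Multiset.card (physHermitePoly N).roots = (physHermitePoly N).natDegree := by
    simp [roots_eq_map hinj hzero, natDegree_eq]
  conv_lhs => rw [← C_leadingCoeff_mul_prod_multiset_X_sub_C hcard]
  rw [leadingCoeff_eq, roots_eq_map hinj hzero, Multiset.map_map]
  rfl

lemma eq_sum_inv_sub (hinj : Function.Injective h)
    (hzero : ∀ i, (physHermitePoly N).IsRoot (h i)) (i : Fin N) :
    h i = ∑ j, (h i - h j)⁻¹ := by
  have hp := eq_C_mul_prod hinj hzero
  have hode := congrArg (eval (h i)) (derivative_derivative N)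
  rw [eval_derivative_derivative_of_eq_C_mul_prod hinj hp] at hode
  simp only [eval_sub, eval_mul, eval_C, eval_X, eval_ofNat, (hzero i).eq_zero, mul_zero,
    sub_zero] at hode
  have hne : eval (h i) (derivative (physHermitePoly N)) ≠ 0 := by
    rw [eval_derivative_of_eq_C_mul_prod hp]
    exact mul_ne_zero (by positivity) (prod_erase_sub_ne_zero hinj i)
  exact (mul_left_cancel₀ (mul_ne_zero two_ne_zero hne) (hode.trans (by ring))).symm

lemma card_roots_toFinset (hinj : Function.Injective h)
    (hzero : ∀ i, (physHermitePoly N).IsRoot (h i)) :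
    (physHermitePoly N).roots.toFinset.card = N := by
  rw [roots_eq_map hinj hzero, Multiset.toFinset_card_of_nodup (univ.nodup.map hinj)]
  simp

lemma sum_sum_log_abs_sub (hinj : Function.Injective h)
    (hzero : ∀ i, (physHermitePoly N).IsRoot (h i)) :
    ∑ i, ∑ j, Real.log |h i - h j|
      = ∑ m ∈ Icc 1 N, m * Real.log (2 * m) - N ^ 2 * Real.log 2 := by
  have hp := eq_C_mul_prod hinj hzero
  have hrow : ∀ i, ∑ j, Real.log |h i - h j|
      = Real.log |eval (h i) (derivative (physHermitePoly N))| - N * Real.log 2 := by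
    intro i
    rw [eval_derivative_of_eq_C_mul_prod hp, abs_mul, Real.log_mul (by positivity)
      (abs_ne_zero.mpr (prod_erase_sub_ne_zero hinj i)), abs_pow, abs_two, Real.log_pow,
      abs_prod, Real.log_prod fun _ hj => abs_ne_zero.mpr (sub_ne_zero_of_mem_erase hinj hj),
      ← Finset.sum_erase univ (f := fun j => Real.log |h i - h j|) (a := i) (by simp)]
    ring
  have hprod : ∏ i, |eval (h i) (derivative (physHermitePoly N))|
      = ∏ m ∈ Icc 1 N, (2 * m : ℝ) ^ m := by
    rw [← prod_abs_eval_derivative_roots (card_roots_toFinset hinj hzero),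
      roots_eq_map hinj hzero, Multiset.map_map]
    rfl
  have hderiv_ne : ∀ i ∈ univ, |eval (h i) (derivative (physHermitePoly N))| ≠ 0 := by
    intro i _
    rw [eval_derivative_of_eq_C_mul_prod hp]
    exact abs_ne_zero.mpr (mul_ne_zero (by positivity) (prod_erase_sub_ne_zero hinj i))
  rw [sum_congr rfl fun i _ => hrow i, sum_sub_distrib, ← Real.log_prod hderiv_ne, hprod,
    Real.log_prod fun m hm => by have := (mem_Icc.mp hm).1; positivity]
  simp [Real.log_pow]
  ring

lemma logGasEnergy_eq (hinj : Function.Injective h)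
    (hzero : ∀ i, (physHermitePoly N).IsRoot (h i)) :
    logGasEnergy h = ((N : ℝ) / 4) * ((N : ℝ) - 1) * (1 + Real.log 2)
      - (1 / 2) * ∑ m ∈ Icc 1 N, (m : ℝ) * Real.log m := by
  have hsq := sum_sq_of_eq_sum_inv_sub hinj (eq_sum_inv_sub hinj hzero)
  have hgauss : ∀ n : ℕ, ∑ m ∈ Icc 1 n, (m : ℝ) = n * (n + 1) / 2 := fun n => by
    induction n with
    | zero => simp
    | succ n ih => rw [sum_Icc_succ_top (by omega), ih]; push_cast; ring
  have hlog2 : ∑ m ∈ Icc 1 N, (m : ℝ) * Real.log (2 * m)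
      = (∑ m ∈ Icc 1 N, (m : ℝ)) * Real.log 2
        + ∑ m ∈ Icc 1 N, (m : ℝ) * Real.log m := by
    rw [sum_mul, ← sum_add_distrib]
    refine sum_congr rfl fun m hm => ?_
    have : (m : ℝ) ≠ 0 := by have := (mem_Icc.mp hm).1; positivity
    rw [Real.log_mul two_ne_zero this]
    ring
  rw [Fintype.card_fin] at hsq
  rw [logGasEnergy, hsq, sum_sum_log_abs_sub hinj hzero, hlog2, hgauss]
  ring

end physHermitePoly

theorem FA_ge_KA_general (N : ℕ) (h : Fin N → ℝ) (hmono : StrictMono h)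
    (hzero : ∀ i, physHermite N (h i) = 0) :
    let F : (Fin N → ℝ) → ℝ := fun v =>
      (1 / 2) * ∑ i, (v i) ^ 2 - ∑ i, ∑ j ∈ Finset.Ioi i, Real.log |v j - v i|
    let K : ℝ := ((N : ℝ) / 4) * ((N : ℝ) - 1) * (1 + Real.log 2)
      - (1 / 2) * ∑ i ∈ Finset.Icc 1 N, (i : ℝ) * Real.log i
    (∀ v : Fin N → ℝ, (∀ i j : Fin N, i ≠ j → v i ≠ v j) →
      K ≤ F v ∧ (F v = K ↔ ∃ σ : Equiv.Perm (Fin N), ∀ i, v i = h (σ i))) ∧ F h = K := by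
  intro F K
  have hroot : ∀ i, (physHermitePoly N).IsRoot (h i) := fun i =>
    (physHermite_eq_eval N (h i)).symm.trans (hzero i)
  have hF : ∀ v, F v = logGasEnergy v := fun v => (logGasEnergy_eq_sum_Ioi v).symm
  have hFh : F h = K := (hF h).trans (physHermitePoly.logGasEnergy_eq hmono.injective hroot)
  refine ⟨fun v hv => ?_, hFh⟩
  set σ := Tuple.sort v
  have hinj : Function.Injective v := fun a b hab => by_contra fun hne => hv a b hne hab
  have hsorted : StrictMono (v ∘ σ) :=
    (Tuple.monotone_sort v).strictMono_of_injective (hinj.comp σ.injective)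
  have hbound := logGasEnergy_add_le hmono hsorted
    (physHermitePoly.eq_sum_inv_sub hmono.injective hroot)
  rw [logGasEnergy_comp_perm, ← hF, ← hF, hFh] at hbound
  have hdist : 0 ≤ ∑ i, ((v ∘ σ) i - h i) ^ 2 := sum_nonneg fun i _ => sq_nonneg _
  refine ⟨by linarith, fun hvK => ⟨σ.symm, fun i => ?_⟩, ?_⟩
  · have hzero_dist := (sum_eq_zero_iff_of_nonneg fun i _ => sq_nonneg ((v ∘ σ) i - h i)).mp
      (by linarith) (σ.symm i) (mem_univ _)
    simpa [sub_eq_zero] using hzero_dist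
  · rintro ⟨τ, hτ⟩
    rw [hF, show v = h ∘ τ from funext hτ, logGasEnergy_comp_perm, ← hF, hFh]

/-- `F_A(v) ≥ K_A` with equality iff `v` is a permutation of the vector of
zeros of `H_N`; in particular `F_A(h_N) = K_A`. -/
theorem FA_ge_KA (N : ℕ) (hN : 2 ≤ N) (h : Fin N → ℝ) (hmono : StrictMono h)
    (hzero : ∀ i, physHermite N (h i) = 0)
    (hall : ∀ x : ℝ, physHermite N x = 0 → ∃ i, x = h i) :
    let F : (Fin N → ℝ) → ℝ := fun v =>
      (1 / 2) * ∑ i, (v i) ^ 2 - ∑ i, ∑ j ∈ Finset.Ioi i, Real.log |v j - v i|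
    let K : ℝ := ((N : ℝ) / 4) * ((N : ℝ) - 1) * (1 + Real.log 2)
      - (1 / 2) * ∑ i ∈ Finset.Icc 1 N, (i : ℝ) * Real.log i
    (∀ v : Fin N → ℝ, (∀ i j : Fin N, i ≠ j → v i ≠ v j) →
      K ≤ F v ∧ (F v = K ↔ ∃ σ : Equiv.Perm (Fin N), ∀ i, v i = h (σ i))) ∧ F h = K :=
  FA_ge_KA_general N h hmono hzero
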